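/- arXiv:2405.11604 — 2 statements merged into one kernel-verified Lean document; each statement's English description precedes it below -/
import Mathlib

section
/- A simple graph G is Tutte-Berge if and only if D(G) induces a graph consisting of isolated vertices only. -/
open Finset

namespace TB

variable {V W : Type*}

/-- A matching of `G` given as a finite set of edges: each element is an edge of `G`
and no two distinct edges share a vertex. -/
def IsMatching (G : SimpleGraph V) (M : Finset (Sym2 V)) : Prop :=
  (∀ e ∈ M, e ∈ G.edgeSet) ∧
    ∀ e ∈ M, ∀ f ∈ M, e ≠ f → ∀ v : V, v ∈ e → v ∉ f

/-- A perfect matching: a matching covering every vertex. -/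
def IsPerfectMatching (G : SimpleGraph V) (M : Finset (Sym2 V)) : Prop :=
  IsMatching G M ∧ ∀ v : V, ∃ e ∈ M, v ∈ e

/-- The matching number `mat(G)`: the maximum size of a matching of `G`. -/
noncomputable def matchingNumber (G : SimpleGraph V) [Fintype V] : ℕ := by
  classical
  exact Finset.univ.powerset.sup fun M => if IsMatching G M then M.card else 0

/-- `T` is an independent set of `G`. -/
def IsIndepSet (G : SimpleGraph V) (T : Finset V) : Prop :=
  ∀ u ∈ T, ∀ v ∈ T, ¬ G.Adj u v

/-- The neighborhood `N_G(T)` of a set of vertices `T`. -/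
noncomputable def nbrSet (G : SimpleGraph V) [Fintype V] (T : Finset V) : Finset V := by
  classical
  exact Finset.univ.filter fun v => ∃ t ∈ T, G.Adj t v

/-- `G` is a Tutte-Berge graph: some independent set `T` satisfies
`|T| = |N_G(T)| + |V(G)| - 2 mat(G)` (written additively to avoid truncated subtraction). -/
noncomputable def TutteBerge (G : SimpleGraph V) [Fintype V] : Prop :=
  ∃ T : Finset V, IsIndepSet G T ∧
    T.card + 2 * matchingNumber G = (nbrSet G T).card + Fintype.card V

/-- `G` is factor-critical: deleting any vertex leaves a graph with a perfect matching. -/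
def FactorCritical (G : SimpleGraph V) : Prop :=
  ∀ v : V, ∃ M, IsPerfectMatching (G.induce {x | x ≠ v}) M

/-- The Gallai-Edmonds set `D(G)`: vertices missed by at least one maximum matching. -/
noncomputable def gallaiD (G : SimpleGraph V) [Fintype V] : Finset V := by
  classical
  exact Finset.univ.filter fun v =>
    ∃ M, IsMatching G M ∧ M.card = matchingNumber G ∧ ∀ e ∈ M, v ∉ e

/-- The cone `G*` over `G`: a new apex vertex (`none`) joined to every vertex of `G`. -/
def cone (G : SimpleGraph V) : SimpleGraph (Option V) :=
  SimpleGraph.fromRel fun a b =>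
    a = none ∨ ∃ u v, a = some u ∧ b = some v ∧ G.Adj u v

/-- The edge polytope `P_H`: convex hull of the points `e_u + e_v` over edges `{u,v}` of `H`. -/
noncomputable def edgePolytope (H : SimpleGraph W) : Set (W → ℝ) := by
  classical
  exact convexHull ℝ
    {x | ∃ u v, H.Adj u v ∧
      x = fun w => (if w = u then (1 : ℝ) else 0) + (if w = v then (1 : ℝ) else 0)}

/-- Every connected component of `H` contains an odd cycle. -/
def HasOddCycleComponents (H : SimpleGraph W) : Prop :=
  ∀ c : H.ConnectedComponent, ∃ u, u ∈ c.supp ∧ ∃ p : H.Walk u u, p.IsCycle ∧ Odd p.length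

/-- The neighborhood of a set of vertices, as a set. -/
def nbrSetSet (H : SimpleGraph W) (T : Set W) : Set W := {w | ∃ t ∈ T, H.Adj t w}

/-- The bipartite graph `B_H(T)` induced by `T`: vertex set `T ∪ N_H(T)`,
with the edges of `H` joining a vertex of `T` to a vertex of `N_H(T)`. -/
def inducedBipartite (H : SimpleGraph W) (T : Set W) :
    SimpleGraph ↥(T ∪ nbrSetSet H T) :=
  SimpleGraph.fromRel fun a b => (a : W) ∈ T ∧ H.Adj a b

/-- An independent set `T` is fundamental in `H` if `B_H(T)` is connected (trivially so
if empty) and, when `T ∪ N_H(T) ≠ V(H)`, each connected component of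
`H \ (T ∪ N_H(T))` contains an odd cycle. -/
def Fundamental (H : SimpleGraph W) (T : Set W) : Prop :=
  (∀ u ∈ T, ∀ v ∈ T, ¬ H.Adj u v) ∧
  (inducedBipartite H T).Preconnected ∧
  (T ∪ nbrSetSet H T ≠ Set.univ →
    HasOddCycleComponents (H.induce (T ∪ nbrSetSet H T)ᶜ))



/-! ### Auxiliary machinery for the proof -/

section Aux
set_option linter.unusedSectionVars false
variable {G : SimpleGraph V} {M N : Finset (Sym2 V)}

lemma edge_unique (hM : IsMatching G M) {e f : Sym2 V} (he : e ∈ M) (hf : f ∈ M)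
    {v : V} (hve : v ∈ e) (hvf : v ∈ f) : e = f := by
  by_contra hne
  exact hM.2 e he f hf hne v hve hvf

lemma adj_of_mem (hM : IsMatching G M) {x y : V} (h : s(x, y) ∈ M) : G.Adj x y :=
  (SimpleGraph.mem_edgeSet G).1 (hM.1 _ h)

lemma matching_empty : IsMatching G (∅ : Finset (Sym2 V)) := by
  constructor <;> simp

open scoped Classical in
noncomputable def pr (M : Finset (Sym2 V)) (v : V) : V :=
  if h : ∃ e ∈ M, v ∈ e then Sym2.Mem.other h.choose_spec.2 else v

open scoped Classical in
lemma pr_spec {v : V} (h : ∃ e ∈ M, v ∈ e) : s(v, pr M v) ∈ M := by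
  rw [pr, dif_pos h, Sym2.other_spec h.choose_spec.2]
  exact h.choose_spec.1

lemma pr_adj (hM : IsMatching G M) {v : V} (h : ∃ e ∈ M, v ∈ e) : G.Adj v (pr M v) :=
  adj_of_mem hM (pr_spec h)

lemma pr_inj (hM : IsMatching G M) {v₁ v₂ : V} (h₁ : ∃ e ∈ M, v₁ ∈ e) (h₂ : ∃ e ∈ M, v₂ ∈ e)
    (h : pr M v₁ = pr M v₂) : v₁ = v₂ := by
  have e₁ := pr_spec h₁
  have e₂ := pr_spec h₂
  rw [h] at e₁
  have := edge_unique hM e₁ e₂ (Sym2.mem_iff.2 (Or.inr rfl)) (Sym2.mem_iff.2 (Or.inr rfl))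
  exact Sym2.congr_left.1 this

variable [Fintype V] [DecidableEq V]

lemma card_le_matchingNumber (hM : IsMatching G M) : M.card ≤ matchingNumber G := by
  classical
  have h := Finset.le_sup (f := fun M => if IsMatching G M then M.card else 0)
    (Finset.mem_powerset.2 (Finset.subset_univ M))
  unfold matchingNumber
  simpa [hM] using h

lemma exists_maxMatching (G : SimpleGraph V) :
    ∃ M, IsMatching G M ∧ M.card = matchingNumber G := by
  classical
  obtain ⟨M, -, hM⟩ := Finset.exists_mem_eq_sup
    (Finset.univ.powerset (α := Sym2 V)) ⟨∅, by simp⟩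
    (fun M => if IsMatching G M then M.card else 0)
  by_cases h : IsMatching G M
  · exact ⟨M, h, by rw [matchingNumber, hM, if_pos h]⟩
  · refine ⟨∅, matching_empty, ?_⟩
    rw [matchingNumber, hM, if_neg h]
    simp

lemma mem_gallaiD {v : V} :
    v ∈ gallaiD G ↔ ∃ M, IsMatching G M ∧ M.card = matchingNumber G ∧ ∀ e ∈ M, v ∉ e := by
  classical
  unfold gallaiD
  simp

lemma mem_nbrSet {T : Finset V} {v : V} : v ∈ nbrSet G T ↔ ∃ t ∈ T, G.Adj t v := by
  classical
  unfold nbrSet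
  simp

lemma augment (hM : IsMatching G M) (hcard : M.card = matchingNumber G)
    {p q : V} (hadj : G.Adj p q) (hp : ∀ e ∈ M, p ∉ e) (hq : ∀ e ∈ M, q ∉ e) : False := by
  have hpq : s(p, q) ∉ M := fun h => hp _ h (by simp)
  have hnew : ∀ f ∈ M, ∀ v : V, v ∈ s(p, q) → v ∉ f := by
    intro f hf v hv
    have : v = p ∨ v = q := Sym2.mem_iff.1 hv
    rcases this with rfl | rfl
    · exact hp _ hf
    · exact hq _ hf
  have hmatch : IsMatching G (insert s(p, q) M) := by
    constructor
    · intro e he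
      rcases Finset.mem_insert.1 he with rfl | he2
      · exact (SimpleGraph.mem_edgeSet G).2 hadj
      · exact hM.1 e he2
    · intro e he f hf hne v hve hvf
      rcases Finset.mem_insert.1 he with rfl | he2
      · rcases Finset.mem_insert.1 hf with rfl | hf2
        · exact hne rfl
        · exact hnew f hf2 v hve hvf
      · rcases Finset.mem_insert.1 hf with rfl | hf2
        · exact hnew e he2 v hvf hve
        · exact hM.2 e he2 f hf2 hne v hve hvf
  have := card_le_matchingNumber hmatch
  rw [Finset.card_insert_of_notMem hpq, hcard] at this
  omega

lemma swap (hM : IsMatching G M) (hcard : M.card = matchingNumber G)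
    {w x y : V} (hw : ∀ e ∈ M, w ∉ e) (hxy : s(x, y) ∈ M) (hadj : G.Adj w x) (hyw : y ≠ w) :
    IsMatching G (insert s(w, x) (M.erase s(x, y))) ∧
      (insert s(w, x) (M.erase s(x, y))).card = matchingNumber G ∧
      (∀ e ∈ insert s(w, x) (M.erase s(x, y)), y ∉ e) := by
  have hxw : x ≠ w := fun h => (G.ne_of_adj hadj) h.symm
  have hxyadj : G.Adj x y := adj_of_mem hM hxy
  have hxney : x ≠ y := G.ne_of_adj hxyadj
  have hwx_notmem : s(w, x) ∉ M.erase s(x, y) := by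
    intro h
    exact hw _ (Finset.mem_of_mem_erase h) (by simp)
  have hdisj : ∀ e ∈ M.erase s(x, y), ∀ v : V, v ∈ s(w, x) → v ∉ e := by
    intro e he v hv hve
    have heM := Finset.mem_of_mem_erase he
    have : v = w ∨ v = x := Sym2.mem_iff.1 hv
    rcases this with rfl | rfl
    · exact hw _ heM hve
    · exact (Finset.ne_of_mem_erase he) (edge_unique hM heM hxy hve (by simp))
  refine ⟨⟨?_, ?_⟩, ?_, ?_⟩
  · intro e he
    rcases Finset.mem_insert.1 he with rfl | he2
    · exact (SimpleGraph.mem_edgeSet G).2 hadj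
    · exact hM.1 e (Finset.mem_of_mem_erase he2)
  · intro e he f hf hne v hve hvf
    rcases Finset.mem_insert.1 he with rfl | he2
    · rcases Finset.mem_insert.1 hf with rfl | hf2
      · exact hne rfl
      · exact hdisj f hf2 v hve hvf
    · rcases Finset.mem_insert.1 hf with rfl | hf2
      · exact hdisj e he2 v hvf hve
      · exact hM.2 e (Finset.mem_of_mem_erase he2) f (Finset.mem_of_mem_erase hf2) hne v hve hvf
  · rw [Finset.card_insert_of_notMem hwx_notmem, Finset.card_erase_of_mem hxy]
    have : 1 ≤ M.card := Finset.card_pos.2 ⟨_, hxy⟩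
    omega
  · intro e he hye
    rcases Finset.mem_insert.1 he with rfl | he2
    · have : y = w ∨ y = x := Sym2.mem_iff.1 hye
      rcases this with h | h
      · exact hyw h
      · exact hxney h.symm
    · exact (Finset.ne_of_mem_erase he2)
        (edge_unique hM (Finset.mem_of_mem_erase he2) hxy hye (by simp))

lemma filter_mem_card {e : Sym2 V} (he : e ∈ G.edgeSet) :
    (univ.filter (· ∈ e)).card = 2 := by
  revert he
  refine Sym2.ind (fun x y => ?_) e
  intro he
  have hadj : G.Adj x y := (SimpleGraph.mem_edgeSet G).1 he
  have hset : (univ.filter (· ∈ s(x, y))) = {x, y} := by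
    ext v
    simp [Sym2.mem_iff]
  rw [hset]
  exact Finset.card_pair (G.ne_of_adj hadj)

lemma missed_card (hM : IsMatching G M) :
    (univ.filter fun v => ∀ e ∈ M, v ∉ e).card + 2 * M.card = Fintype.card V := by
  have hcov : (univ.filter fun v => ¬ ∀ e ∈ M, v ∉ e)
      = M.biUnion (fun e => univ.filter (· ∈ e)) := by
    ext v
    simp
  have hcard : (univ.filter fun v => ¬ ∀ e ∈ M, v ∉ e).card = 2 * M.card := by
    rw [hcov, Finset.card_biUnion]
    · rw [Finset.sum_congr rfl (fun e he => filter_mem_card (hM.1 e he)), Finset.sum_const,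
        smul_eq_mul, mul_comm]
    · intro e he f hf hef
      rw [Function.onFun, Finset.disjoint_left]
      intro v hv hv'
      exact hM.2 e he f hf hef v (Finset.mem_filter.1 hv).2 (Finset.mem_filter.1 hv').2
  have := Finset.card_filter_add_card_filter_not
    (s := (univ : Finset V)) (p := fun v => ∀ e ∈ M, v ∉ e)
  rw [hcard] at this
  simpa [Finset.card_univ] using this

lemma key : ∀ (k : ℕ) (M N : Finset (Sym2 V)), IsMatching G M → M.card = matchingNumber G →
    IsMatching G N → N.card = matchingNumber G → (M \ N).card ≤ k →
    ∀ w : V, (∀ e ∈ N, w ∉ e) → ∀ a b : V, s(a, b) ∈ M → a ≠ w → b ≠ w →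
    a ∈ gallaiD G ∨ b ∈ gallaiD G ∨
      ∃ M', IsMatching G M' ∧ M'.card = matchingNumber G ∧ (∀ e ∈ M', w ∉ e) ∧
        s(a, b) ∈ M' ∧ M' \ M ⊆ N := by
  intro k
  induction k with
  | zero =>
    intro M N hM hMc hN hNc hk w hwN a b hab haw hbw
    by_cases hwM : ∀ e ∈ M, w ∉ e
    · exact Or.inr (Or.inr ⟨M, hM, hMc, hwM, hab, by simp⟩)
    · push_neg at hwM
      obtain ⟨e, heM, hwe⟩ := hwM
      exfalso
      have hMN : M \ N = ∅ := Finset.card_eq_zero.1 (Nat.le_zero.1 hk)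
      have : e ∈ M \ N := Finset.mem_sdiff.2 ⟨heM, fun h => hwN _ h hwe⟩
      rw [hMN] at this
      exact absurd this (Finset.notMem_empty e)
  | succ k ih =>
    intro M N hM hMc hN hNc hk w hwN a b hab haw hbw
    by_cases hwM : ∀ e ∈ M, w ∉ e
    · exact Or.inr (Or.inr ⟨M, hM, hMc, hwM, hab, by simp⟩)
    push_neg at hwM
    obtain ⟨e, heM, hwe⟩ := hwM
    have hwxM : s(w, Sym2.Mem.other hwe) ∈ M := by rw [Sym2.other_spec hwe]; exact heM
    set x := Sym2.Mem.other hwe with hxdef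
    clear_value x
    have hadj_wx : G.Adj w x := adj_of_mem hM hwxM
    have hwxN : s(w, x) ∉ N := fun h => hwN _ h (by simp)
    have hxab : s(w, x) ≠ s(a, b) := by
      intro h
      have hw2 : w ∈ s(a, b) := h ▸ (by simp : w ∈ s(w, x))
      rcases Sym2.mem_iff.1 hw2 with h' | h'
      · exact haw h'.symm
      · exact hbw h'.symm
    have hxa : x ≠ a := by
      intro h
      exact hxab (edge_unique hM hwxM hab (Sym2.mem_iff.2 (Or.inr h.symm))
        (Sym2.mem_iff.2 (Or.inl rfl)))
    have hxb : x ≠ b := by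
      intro h
      exact hxab (edge_unique hM hwxM hab (Sym2.mem_iff.2 (Or.inr h.symm))
        (Sym2.mem_iff.2 (Or.inr rfl)))
    have hxNcov : ∃ f ∈ N, x ∈ f := by
      by_contra h
      push_neg at h
      exact augment hN hNc hadj_wx hwN h
    obtain ⟨f, hfN, hxf⟩ := hxNcov
    have hxyN : s(x, Sym2.Mem.other hxf) ∈ N := by rw [Sym2.other_spec hxf]; exact hfN
    set y := Sym2.Mem.other hxf with hydef
    clear_value y
    have hadj_xy : G.Adj x y := adj_of_mem hN hxyN
    have hy_ne_w : y ≠ w := by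
      intro h
      exact hwN _ hxyN (Sym2.mem_iff.2 (Or.inr h.symm))
    obtain ⟨hN₁, hN₁c, hN₁y⟩ := swap hN hNc hwN hxyN hadj_wx hy_ne_w
    by_cases hya : y = a
    · exact Or.inl (mem_gallaiD.2 ⟨_, hN₁, hN₁c, hya ▸ hN₁y⟩)
    by_cases hyb : y = b
    · exact Or.inr (Or.inl (mem_gallaiD.2 ⟨_, hN₁, hN₁c, hyb ▸ hN₁y⟩))
    -- measure decreases
    have hwx_sdiff : s(w, x) ∈ M \ N := Finset.mem_sdiff.2 ⟨hwxM, hwxN⟩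
    have hsub1 : M \ (insert s(w, x) (N.erase s(x, y))) ⊆ (M \ N).erase s(w, x) := by
      intro e' he'
      obtain ⟨he'M, he'N₁⟩ := Finset.mem_sdiff.1 he'
      have hne : e' ≠ s(w, x) := by
        intro h
        rw [h] at he'N₁
        exact he'N₁ (Finset.mem_insert_self _ _)
      refine Finset.mem_erase.2 ⟨hne, Finset.mem_sdiff.2 ⟨he'M, fun he'N => ?_⟩⟩
      have hexy : e' = s(x, y) := by
        by_contra h
        exact he'N₁ (Finset.mem_insert_of_mem (Finset.mem_erase.2 ⟨h, he'N⟩))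
      rw [hexy] at he'M
      have h2 := edge_unique hM he'M hwxM (Sym2.mem_iff.2 (Or.inl rfl))
        (Sym2.mem_iff.2 (Or.inr rfl))
      rw [Sym2.eq_swap] at h2
      exact hy_ne_w (Sym2.congr_left.1 h2)
    have hk' : (M \ (insert s(w, x) (N.erase s(x, y)))).card ≤ k := by
      have h1 := Finset.card_le_card hsub1
      rw [Finset.card_erase_of_mem hwx_sdiff] at h1
      have h2 : 1 ≤ (M \ N).card := Finset.card_pos.2 ⟨_, hwx_sdiff⟩
      omega
    rcases ih M (insert s(w, x) (N.erase s(x, y))) hM hMc hN₁ hN₁c hk' y hN₁y a b hab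
        (fun h => hya h.symm) (fun h => hyb h.symm) with ha | hb | ⟨M', hM', hM'c, hM'y, habM', hsubM'⟩
    · exact Or.inl ha
    · exact Or.inr (Or.inl hb)
    have hxM'cov : ∃ g ∈ M', x ∈ g := by
      by_contra h
      push_neg at h
      exact augment hM' hM'c hadj_xy h hM'y
    obtain ⟨g, hgM', hxg⟩ := hxM'cov
    have hgwx : g = s(w, x) := by
      by_cases hgM : g ∈ M
      · exact edge_unique hM hgM hwxM hxg (by simp)
      · have hgN₁ : g ∈ insert s(w, x) (N.erase s(x, y)) := hsubM' (Finset.mem_sdiff.2 ⟨hgM', hgM⟩)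
        rcases Finset.mem_insert.1 hgN₁ with h | h
        · exact h
        · exfalso
          have := edge_unique hN (Finset.mem_of_mem_erase h) hxyN hxg (by simp)
          exact (Finset.ne_of_mem_erase h) this
    have hwxM' : s(x, w) ∈ M' := by rw [Sym2.eq_swap, ← hgwx]; exact hgM'
    obtain ⟨hM'', hM''c, hM''w⟩ := swap hM' hM'c hM'y hwxM' hadj_xy.symm (fun h => hy_ne_w h.symm)
    refine Or.inr (Or.inr ⟨insert s(y, x) (M'.erase s(x, w)), hM'', hM''c, hM''w, ?_, ?_⟩)
    · refine Finset.mem_insert_of_mem (Finset.mem_erase.2 ⟨?_, habM'⟩)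
      intro h
      have hw2 : w ∈ s(a, b) := h ▸ (by simp : w ∈ s(x, w))
      rcases Sym2.mem_iff.1 hw2 with h' | h'
      · exact haw h'.symm
      · exact hbw h'.symm
    · intro e' he'
      obtain ⟨he'M'', he'M⟩ := Finset.mem_sdiff.1 he'
      rcases Finset.mem_insert.1 he'M'' with rfl | he'2
      · rw [Sym2.eq_swap]; exact hxyN
      · have he'ne : e' ≠ s(x, w) := Finset.ne_of_mem_erase he'2
        have he'M' : e' ∈ M' := Finset.mem_of_mem_erase he'2
        have he'N₁ : e' ∈ insert s(w, x) (N.erase s(x, y)) :=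
          hsubM' (Finset.mem_sdiff.2 ⟨he'M', he'M⟩)
        rcases Finset.mem_insert.1 he'N₁ with h | h
        · exact absurd (h.trans Sym2.eq_swap) he'ne
        · exact Finset.mem_of_mem_erase h

lemma mem_D_or (hM : IsMatching G M) (hMc : M.card = matchingNumber G)
    {u a b : V} (hu : u ∈ gallaiD G) (hadj : G.Adj u a) (hab : s(a, b) ∈ M) :
    a ∈ gallaiD G ∨ b ∈ gallaiD G := by
  by_cases hbu : b = u
  · exact Or.inr (hbu ▸ hu)
  obtain ⟨N, hN, hNc, huN⟩ := mem_gallaiD.1 hu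
  have haw : a ≠ u := fun h => G.ne_of_adj hadj h.symm
  rcases key (M \ N).card M N hM hMc hN hNc le_rfl u huN a b hab haw hbu with
    h | h | ⟨M', hM', hM'c, hM'u, habM', -⟩
  · exact Or.inl h
  · exact Or.inr h
  · obtain ⟨hM'', hM''c, hM''b⟩ := swap hM' hM'c hM'u habM' hadj hbu
    exact Or.inr (mem_gallaiD.2 ⟨_, hM'', hM''c, hM''b⟩)

end Aux


/-- `G` is Tutte-Berge iff `D(G)` induces a graph consisting of isolated
vertices only (i.e. `D(G)` spans no edges of `G`). -/
theorem tutteBerge_iff_gallaiD_isolated {V : Type*} [Fintype V] (G : SimpleGraph V) :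
    TutteBerge G ↔ ∀ u ∈ gallaiD G, ∀ v ∈ gallaiD G, ¬ G.Adj u v := by
  classical
  constructor
  · rintro ⟨T, hTind, hTeq⟩ u hu v hv
    have hsub : ∀ w ∈ gallaiD G, w ∈ T := by
      intro w hw
      obtain ⟨M, hM, hMc, hwMiss⟩ := mem_gallaiD.1 hw
      have hmissed := missed_card hM
      have hsplit := Finset.card_filter_add_card_filter_not
        (s := T) (p := fun z => ∀ e ∈ M, z ∉ e)
      have hle1 : (T.filter fun z => ¬ ∀ e ∈ M, z ∉ e).card ≤ (nbrSet G T).card := by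
        apply Finset.card_le_card_of_injOn (pr M)
        · intro t ht
          obtain ⟨ht1, ht2⟩ := Finset.mem_filter.1 ht
          push_neg at ht2
          exact mem_nbrSet.2 ⟨t, ht1, pr_adj hM ht2⟩
        · intro t₁ h₁ t₂ h₂ h
          have c₁ := (Finset.mem_filter.1 h₁).2
          have c₂ := (Finset.mem_filter.1 h₂).2
          push_neg at c₁ c₂
          exact pr_inj hM c₁ c₂ h
      have hle2 : (T.filter fun z => ∀ e ∈ M, z ∉ e).card
          ≤ (univ.filter fun z => ∀ e ∈ M, z ∉ e).card :=
        Finset.card_le_card (Finset.filter_subset_filter _ (Finset.subset_univ T))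
      have hcardle : (univ.filter fun z => ∀ e ∈ M, z ∉ e).card
          ≤ (T.filter fun z => ∀ e ∈ M, z ∉ e).card := by omega
      have heq := Finset.eq_of_subset_of_card_le
        (Finset.filter_subset_filter _ (Finset.subset_univ T)) hcardle
      have hwmem : w ∈ univ.filter fun z => ∀ e ∈ M, z ∉ e :=
        Finset.mem_filter.2 ⟨Finset.mem_univ w, hwMiss⟩
      rw [← heq] at hwmem
      exact (Finset.mem_filter.1 hwmem).1
    exact hTind u (hsub u hu) v (hsub v hv)
  · intro hind
    obtain ⟨M, hM, hMc⟩ := exists_maxMatching G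
    refine ⟨gallaiD G, hind, ?_⟩
    have hmissed := missed_card hM
    have hsplit := Finset.card_filter_add_card_filter_not
      (s := gallaiD G) (p := fun z => ∀ e ∈ M, z ∉ e)
    have hDp : (gallaiD G).filter (fun z => ∀ e ∈ M, z ∉ e)
        = univ.filter fun z => ∀ e ∈ M, z ∉ e := by
      apply Finset.Subset.antisymm (Finset.filter_subset_filter _ (Finset.subset_univ _))
      intro z hz
      obtain ⟨-, hz2⟩ := Finset.mem_filter.1 hz
      exact Finset.mem_filter.2 ⟨mem_gallaiD.2 ⟨M, hM, hMc, hz2⟩, hz2⟩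
    have hle1 : ((gallaiD G).filter fun z => ¬ ∀ e ∈ M, z ∉ e).card
        ≤ (nbrSet G (gallaiD G)).card := by
      apply Finset.card_le_card_of_injOn (pr M)
      · intro t ht
        obtain ⟨ht1, ht2⟩ := Finset.mem_filter.1 ht
        push_neg at ht2
        exact mem_nbrSet.2 ⟨t, ht1, pr_adj hM ht2⟩
      · intro t₁ h₁ t₂ h₂ h
        have c₁ := (Finset.mem_filter.1 h₁).2
        have c₂ := (Finset.mem_filter.1 h₂).2
        push_neg at c₁ c₂
        exact pr_inj hM c₁ c₂ h
    have hcovN : ∀ x ∈ nbrSet G (gallaiD G), ∃ e ∈ M, x ∈ e := by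
      intro x hx
      obtain ⟨t, htD, hadj⟩ := mem_nbrSet.1 hx
      have hxD : x ∉ gallaiD G := fun hxD => hind t htD x hxD hadj
      by_contra h
      push_neg at h
      exact hxD (mem_gallaiD.2 ⟨M, hM, hMc, h⟩)
    have hle2 : (nbrSet G (gallaiD G)).card
        ≤ ((gallaiD G).filter fun z => ¬ ∀ e ∈ M, z ∉ e).card := by
      apply Finset.card_le_card_of_injOn (pr M)
      · intro x hx
        obtain ⟨t, htD, hadj⟩ := mem_nbrSet.1 hx
        have hxcov := hcovN x hx
        have hb : s(x, pr M x) ∈ M := pr_spec hxcov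
        rcases mem_D_or hM hMc htD hadj hb with h | h
        · exact absurd h (fun hxD => hind t htD x hxD hadj)
        · refine Finset.mem_filter.2 ⟨h, ?_⟩
          push_neg
          exact ⟨_, hb, Sym2.mem_iff.2 (Or.inr rfl)⟩
      · intro x₁ h₁ x₂ h₂ h
        exact pr_inj hM (hcovN x₁ h₁) (hcovN x₂ h₂) h
    have hDcards : ((gallaiD G).filter (fun z => ∀ e ∈ M, z ∉ e)).card
        = (univ.filter fun z => ∀ e ∈ M, z ∉ e).card := by rw [hDp]
    omega

end TB
end

section
/- Let G be a simple graph on n vertices and let p = (1,1,…,1, n − 2·mat(G)) ∈ ℝ^{n+1}. Then p ∈ q·P_{G*}, where q = n − mat(G), P_{G*} is the edge polytope of the cone G* over G. -/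
open Finset Pointwise

namespace TB

variable {V W : Type*}

/-- There exists a matching realizing the matching number. -/
lemma exists_max_matching (G : SimpleGraph V) [Fintype V] [DecidableEq V] :
    ∃ M : Finset (Sym2 V), IsMatching G M ∧ M.card = matchingNumber G := by
  classical
  obtain ⟨M, -, hM⟩ := Finset.exists_mem_eq_sup
    (Finset.univ.powerset (α := Sym2 V)) ⟨∅, by simp⟩
    (fun M => if IsMatching G M then M.card else 0)
  by_cases h : IsMatching G M
  · exact ⟨M, h, by rw [matchingNumber, hM, if_pos h]⟩
  · refine ⟨∅, ⟨by simp, by simp⟩, ?_⟩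
    rw [matchingNumber, hM, if_neg h]
    simp

/-- the point `p = (1,…,1, n - 2 mat(G))` lies in `q · P_{G*}`
where `q = n - mat(G)`. -/
theorem point_mem_smul_edgePolytope (n : ℕ) (hn : 0 < n) (G : SimpleGraph (Fin n)) :
    (fun w : Option (Fin n) =>
        match w with
        | some _ => (1 : ℝ)
        | none => (n : ℝ) - 2 * (matchingNumber G : ℝ)) ∈
      ((n - matchingNumber G : ℕ) : ℝ) • edgePolytope (cone G) := by
  classical
  obtain ⟨M, hM, hMcard⟩ := exists_max_matching G
  set m := matchingNumber G with hm
  -- uncovered vertices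
  set U : Finset (Fin n) := Finset.univ.filter (fun v => ∀ e ∈ M, v ∉ e) with hU
  -- each edge covers exactly two vertices
  have hcov : ∀ e ∈ M, (Finset.univ.filter (fun v : Fin n => v ∈ e)).card = 2 := by
    intro e he
    induction e using Sym2.ind with
    | _ u v =>
      have hadj : G.Adj u v := (SimpleGraph.mem_edgeSet G).mp (hM.1 _ he)
      have huv : u ≠ v := hadj.ne
      have : Finset.univ.filter (fun x : Fin n => x ∈ s(u, v)) = {u, v} := by
        ext x; simp [Sym2.mem_iff]
      rw [this, Finset.card_insert_of_notMem (by simp [huv]), Finset.card_singleton]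
  -- counting: n = 2m + |U|
  have hcount : n = 2 * m + U.card := by
    have hC : (Finset.univ.filter (fun v : Fin n => ∃ e ∈ M, v ∈ e)).card = 2 * m := by
      have : Finset.univ.filter (fun v : Fin n => ∃ e ∈ M, v ∈ e)
          = M.biUnion (fun e => Finset.univ.filter (fun v : Fin n => v ∈ e)) := by
        ext x; simp
      rw [this, Finset.card_biUnion, Finset.sum_congr rfl hcov]
      · simp [← hMcard, mul_comm]
      · intro e he f hf hef
        simp only [Finset.disjoint_filter, Finset.mem_filter]
        intro x _ hxe hxf
        exact hM.2 e he f hf hef x hxe hxf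
    have := Finset.card_filter_add_card_filter_not
      (s := (Finset.univ : Finset (Fin n))) (p := fun v => ∃ e ∈ M, v ∈ e)
    rw [hC] at this
    have hU' : (Finset.univ.filter (fun v : Fin n => ¬ ∃ e ∈ M, v ∈ e)) = U := by
      ext x; simp [hU]
    rw [hU'] at this
    simpa using this.symm
  -- the vertices of the polytope used in the convex combination
  set y : Sym2 (Fin n) ⊕ Fin n → Option (Fin n) → ℝ := fun j w =>
    match j with
    | .inl e => match w with
      | some v => if v ∈ e then (1 : ℝ) else 0
      | none => 0
    | .inr v => (if w = none then (1 : ℝ) else 0) + (if w = some v then (1 : ℝ) else 0)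
    with hy
  set S : Set (Option (Fin n) → ℝ) :=
    {x | ∃ u v, (cone G).Adj u v ∧
      x = fun w => (if w = u then (1 : ℝ) else 0) + (if w = v then (1 : ℝ) else 0)} with hS
  set J : Finset (Sym2 (Fin n) ⊕ Fin n) := M.disjSum U with hJ
  -- each y j is a generator
  have hyS : ∀ j ∈ J, y j ∈ S := by
    intro j hj
    rcases j with e | v
    · have he : e ∈ M := by simpa [hJ] using hj
      induction e using Sym2.ind with
      | _ u v =>
        have hadj : G.Adj u v := (SimpleGraph.mem_edgeSet G).mp (hM.1 _ he)
        have huv : u ≠ v := hadj.ne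
        refine ⟨some u, some v, by simp [cone, SimpleGraph.fromRel_adj, huv, hadj], ?_⟩
        funext w
        rcases w with _ | x
        · simp [hy]
        · show (if x ∈ s(u, v) then (1 : ℝ) else 0) = _
          by_cases hxu : x = u
          · subst hxu; simp [Sym2.mem_iff, huv]
          · by_cases hxv : x = v
            · subst hxv; simp [Sym2.mem_iff, hxu]
            · simp [Sym2.mem_iff, hxu, hxv]
    · exact ⟨none, some v, by simp [cone, SimpleGraph.fromRel_adj], by funext w; simp [hy]⟩
  -- the sum of the generators is the target point
  have hsum : ∑ j ∈ J, y j = (fun w : Option (Fin n) =>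
      match w with
      | some _ => (1 : ℝ)
      | none => (n : ℝ) - 2 * (m : ℝ)) := by
    funext w
    rw [Finset.sum_apply]
    rw [hJ, Finset.sum_disjSum]
    rcases w with _ | x
    · have h1 : ∑ e ∈ M, y (.inl e) none = 0 := by simp [hy]
      have h2 : ∑ v ∈ U, y (.inr v) none = U.card := by simp [hy]
      rw [h1, h2]
      have : (n : ℝ) = 2 * m + U.card := by exact_mod_cast congrArg Nat.cast hcount
      simp only [zero_add]
      linarith
    · by_cases hx : ∃ e ∈ M, x ∈ e
      · obtain ⟨e0, he0, hxe0⟩ := hx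
        have h1 : ∑ e ∈ M, y (.inl e) (some x) = 1 := by
          rw [Finset.sum_eq_single_of_mem e0 he0]
          · simp [hy, hxe0]
          · intro f hf hfe
            have : x ∉ f := hM.2 e0 he0 f hf (Ne.symm hfe) x hxe0
            simp [hy, this]
        have hxU : x ∉ U := by simp only [hU, Finset.mem_filter]; push_neg;
                               exact fun _ => ⟨e0, he0, hxe0⟩
        have h2 : ∑ v ∈ U, y (.inr v) (some x) = 0 := by
          apply Finset.sum_eq_zero
          intro v hv
          have : x ≠ v := fun h => hxU (h ▸ hv)
          simp [hy, Option.some_injective, this]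
        rw [h1, h2]; norm_num
      · have h1 : ∑ e ∈ M, y (.inl e) (some x) = 0 := by
          apply Finset.sum_eq_zero
          intro e he
          have : x ∉ e := fun h => hx ⟨e, he, h⟩
          simp [hy, this]
        have hxU : x ∈ U := by
          simp only [hU, Finset.mem_filter]
          exact ⟨Finset.mem_univ _, fun e he hxe => hx ⟨e, he, hxe⟩⟩
        have h2 : ∑ v ∈ U, y (.inr v) (some x) = 1 := by
          rw [Finset.sum_eq_single_of_mem x hxU]
          · simp [hy]
          · intro v hv hvx
            simp [hy, Ne.symm hvx]
        rw [h1, h2]; norm_num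
  -- cardinality of the index set
  have hJcard : J.card = n - m := by
    rw [hJ, Finset.card_disjSum]
    omega
  have hq0 : 0 < n - m := by omega
  have hqR : ((n - m : ℕ) : ℝ) ≠ 0 := by positivity
  -- conclude
  show _ ∈ ((n - m : ℕ) : ℝ) • edgePolytope (cone G)
  have hEP : edgePolytope (cone G) = convexHull ℝ S := by
    rw [edgePolytope, hS]
    congr!
  rw [hEP, Set.mem_smul_set_iff_inv_smul_mem₀ hqR]
  have key : (((n - m : ℕ) : ℝ))⁻¹ • (∑ j ∈ J, y j) ∈ convexHull ℝ S := by
    rw [Finset.smul_sum]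
    apply (convex_convexHull ℝ S).sum_mem
    · intro j _; positivity
    · rw [Finset.sum_const, hJcard, nsmul_eq_mul, mul_inv_cancel₀ hqR]
    · intro j hj; exact subset_convexHull ℝ S (hyS j hj)
  rw [hsum] at key
  exact key

end TB
end
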